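/- arXiv:1511.02147 — 3 statements merged into one kernel-verified Lean document; each statement's English description precedes it below -/
import Mathlib

section
/- Let τ : D₁ → D₂ be a natural transformation between two cofiltered diagrams (over the same index category) in the category of compact Hausdorff spaces. If every component τᵢ : D₁(i) → D₂(i) is surjective, then the induced map between the limits, lim τ : lim D₁ → lim D₂, is surjective. -/
open CategoryTheory Limits
attribute [local instance] CategoryTheory.ConcreteCategory.instFunLike

/-!
Fix a point `y` of `lim D₂`. The fibres `τᵢ⁻¹(yᵢ)` are closed, hence compact, and nonempty by
surjectivity; `D₁` maps them into one another, so they form a cofiltered diagram of nonempty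
compact Hausdorff spaces. Its limit is nonempty by the finite intersection property, and any
point of it is a compatible family in `D₁` mapping to `y`.
-/

universe u

namespace CategoryTheory.Limits.Concrete

variable {C : Type*} [Category C] {FC : C → C → Type*} {CC : C → Type*}
  [∀ X Y, FunLike (FC X Y) (CC X) (CC Y)] [ConcreteCategory C FC]
  {J : Type*} [Category J] (F : J ⥤ C) [PreservesLimit F (forget C)] [HasLimit F]

theorem exists_limit_π_eq (s : (F ⋙ forget C).sections) :
    ∃ x : ToType (limit F), ∀ j, limit.π F j x = s.1 j :=
  ⟨(Types.isLimitEquivSections (isLimitOfPreserves (forget C) (limit.isLimit F))).symm s,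
    Types.isLimitEquivSections_symm_apply (isLimitOfPreserves (forget C) (limit.isLimit F)) s⟩

end CategoryTheory.Limits.Concrete

namespace CompHaus

variable {I : Type u} [SmallCategory I] {D₁ D₂ : I ⥤ CompHaus.{u}} (τ : D₁ ⟶ D₂)
  (y : (D₂ ⋙ forget CompHaus).sections)

theorem map_mem_fiber {i j : I} (f : i ⟶ j) {x : D₁.obj i} (hx : τ.app i x = y.1 i) :
    τ.app j (D₁.map f x) = y.1 j := by
  rw [NatTrans.naturality_apply, hx]
  exact y.2 f

def fiberDiagram : I ⥤ TopCat.{u} where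
  obj i := TopCat.of {x : D₁.obj i | τ.app i x = y.1 i}
  map f := TopCat.ofHom ⟨fun x => ⟨D₁.map f x.1, map_mem_fiber τ y f x.2⟩, by fun_prop⟩

instance (i : I) : T2Space ((fiberDiagram τ y).obj i) :=
  inferInstanceAs (T2Space {x : D₁.obj i | τ.app i x = y.1 i})

instance (i : I) : CompactSpace ((fiberDiagram τ y).obj i) :=
  isCompact_iff_compactSpace.mp
    (isClosed_eq (τ.app i).hom.hom.continuous continuous_const).isCompact

theorem exists_section_lift_of_surjective [IsCofiltered I]
    (hsurj : ∀ i, Function.Surjective (τ.app i)) :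
    ∃ x : (D₁ ⋙ forget CompHaus).sections, ∀ i, τ.app i (x.1 i) = y.1 i := by
  have (i : I) : Nonempty ((fiberDiagram τ y).obj i) :=
    let ⟨x, hx⟩ := hsurj i (y.1 i); ⟨⟨x, hx⟩⟩
  obtain ⟨u, hu⟩ := TopCat.nonempty_limitCone_of_compact_t2_cofiltered_system.{u, u}
    (fiberDiagram τ y)
  exact ⟨⟨fun i => (u i).1, fun f => congrArg Subtype.val (hu f)⟩, fun i => (u i).2⟩

end CompHaus

/-- If `τ : D₁ ⟶ D₂` is a natural transformation between cofiltered diagrams of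
compact Hausdorff spaces with all components surjective, then the induced map
between the limits is surjective. -/
theorem surjective_limMap_of_surjective
    {I : Type u} [SmallCategory I] [IsCofiltered I]
    (D₁ D₂ : I ⥤ CompHaus.{u}) (τ : D₁ ⟶ D₂)
    (hsurj : ∀ i : I, Function.Surjective (τ.app i)) :
    Function.Surjective (limMap τ) := by
  intro y
  obtain ⟨s, hs⟩ := CompHaus.exists_section_lift_of_surjective τ
    (Types.sectionOfCone ((forget CompHaus).mapCone (limit.cone D₂)) y) hsurj
  obtain ⟨x, hx⟩ := Concrete.exists_limit_π_eq D₁ s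
  refine ⟨x, Concrete.limit_ext D₂ _ _ fun i => ?_⟩
  rw [← ConcreteCategory.comp_apply, limMap_π, ConcreteCategory.comp_apply, hx, hs]
  rfl
end

section
/- Let (X, ρᵢ : X → Xᵢ) be the limit of a cofiltered diagram of topological spaces, and let (Y, fᵢ : Y → Xᵢ) be a cone over the same diagram consisting of surjective continuous maps. Then the mediating map f : Y → X has dense image. -/
open CategoryTheory Limits

attribute [local instance] CategoryTheory.ConcreteCategory.instFunLike

/-!
Because the diagram is cofiltered, the sets `ρⱼ⁻¹ V` with `V ⊆ Xⱼ` open form a basis of the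
limit topology. A nonempty basic set `ρⱼ⁻¹ V` has `V` nonempty, and `V` meets `ρⱼ (f Y) = fⱼ Y`
as soon as `fⱼ` has dense range, so `f Y` meets every nonempty basic open set.
-/

namespace TopCat

variable {I : Type u} [SmallCategory I] [IsCofiltered I] {F : I ⥤ TopCat.{u}}
  {c : Cone F}

theorem isTopologicalBasis_preimage_opens_of_isLimit (hc : IsLimit c) :
    TopologicalSpace.IsTopologicalBasis
      {U : Set c.pt | ∃ (j : I) (V : Set (F.obj j)), IsOpen V ∧ U = c.π.app j ⁻¹' V} :=
  isTopologicalBasis_cofiltered_limit F c hc (fun _ => {U | IsOpen U})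
    (fun _ => TopologicalSpace.isTopologicalBasis_opens) (fun _ => isOpen_univ)
    (fun _ _ _ h₁ h₂ => h₁.inter h₂)
    (fun _ _ f _ hV => hV.preimage (F.map f).hom.continuous)

theorem dense_of_forall_dense_image_π (hc : IsLimit c) {S : Set c.pt}
    (hS : ∀ j : I, Dense (c.π.app j '' S)) : Dense S := by
  rw [(isTopologicalBasis_preimage_opens_of_isLimit hc).dense_iff]
  rintro _ ⟨j, V, hV, rfl⟩ ⟨x, hx⟩
  obtain ⟨_, hyV, y, hyS, rfl⟩ := (hS j).inter_open_nonempty V hV ⟨_, hx⟩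
  exact ⟨y, hyV, hyS⟩

theorem denseRange_lift_of_forall_denseRange_π (hc : IsLimit c) (d : Cone F)
    (hd : ∀ j : I, DenseRange (d.π.app j)) : DenseRange (hc.lift d) := by
  refine dense_of_forall_dense_image_π hc fun j => ?_
  have hfac : c.π.app j ∘ hc.lift d = d.π.app j :=
    funext (ConcreteCategory.congr_hom (hc.fac d j))
  rw [← Set.range_comp, hfac]
  exact hd j

end TopCat

/-- If `(X, ρᵢ)` is a cofiltered limit of topological spaces and `(Y, fᵢ)` is a
cone over the same diagram with all legs surjective, then the mediating map
`Y → X` has dense image. -/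
theorem denseRange_lift_of_surjective_cone
    {I : Type u} [SmallCategory I] [IsCofiltered I]
    (F : I ⥤ TopCat.{u}) (c : Cone F) (hc : IsLimit c) (d : Cone F)
    (hsurj : ∀ i : I, Function.Surjective (d.π.app i)) :
    DenseRange (hc.lift d) :=
  TopCat.denseRange_lift_of_forall_denseRange_π hc d fun i => (hsurj i).denseRange
end

section
/- Any class of finite monoids defined by satisfaction of a set of profinite equations (pairs u = v of elements of a free profinite monoid on a finite set) is closed under finite products, submonoids, and quotient monoids. -/
open Function

/-- The congruences on a monoid `M` with finite quotient. -/
def FinCon (M : Type u) [Monoid M] : Type u := {c : Con M // Finite c.Quotient}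

/-- The free profinite monoid on a set `X`, realized concretely as the
cofiltered limit of all finite quotient monoids of the free monoid `X*`:
its elements are the compatible families of elements of the finite quotients
of `FreeMonoid X`. -/
def FreeProfiniteMonoid (X : Type u) : Type u :=
  {u : ∀ c : FinCon (FreeMonoid X), c.1.Quotient //
    ∀ (c d : FinCon (FreeMonoid X)) (h : c.1 ≤ d.1),
      Con.map c.1 d.1 h (u c) = u d}

namespace FreeProfiniteMonoid

instance (X : Type u) : Monoid (FreeProfiniteMonoid X) where
  mul u v := ⟨fun c => u.1 c * v.1 c, fun c d h => by
    rw [map_mul, u.2 c d h, v.2 c d h]⟩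
  one := ⟨fun _ => 1, fun c d h => by rw [map_one]⟩
  mul_assoc u v w := Subtype.ext (funext fun c => mul_assoc _ _ _)
  one_mul u := Subtype.ext (funext fun c => one_mul _)
  mul_one u := Subtype.ext (funext fun c => mul_one _)

/-- The canonical monoid homomorphism from the free monoid into the free
profinite monoid, given by the cone of quotient maps. -/
def ofFree (X : Type u) : FreeMonoid X →* FreeProfiniteMonoid X where
  toFun w := ⟨fun c => c.1.mk' w, fun c d h => rfl⟩
  map_one' := Subtype.ext (funext fun c => map_one c.1.mk')
  map_mul' x y := Subtype.ext (funext fun c => map_mul c.1.mk' x y)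

/-- The kernel congruence of a homomorphism into a finite monoid has finite
quotient. -/
instance finiteKerQuotient {X : Type u} {A : Type u} [Monoid A] [Finite A]
    (h : FreeMonoid X →* A) : Finite (Con.ker h).Quotient :=
  Finite.of_injective _ (Con.kerLift_injective h)

/-- The evaluation (limit projection) `ĥ : X̂* → A` associated with a
homomorphism `h : X* → A` into a finite monoid `A`. -/
def evalHat {X : Type u} {A : Type u} [Monoid A] [Finite A]
    (h : FreeMonoid X →* A) : FreeProfiniteMonoid X →* A where
  toFun u := Con.kerLift h (u.1 ⟨Con.ker h, inferInstance⟩)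
  map_one' := map_one (Con.kerLift h)
  map_mul' u v := map_mul (Con.kerLift h) _ _

/-- A finite monoid `A` satisfies the profinite equation `u = v` (where
`u, v ∈ X̂*`) if every continuous homomorphism `X̂* → A`, equivalently every
homomorphism `X* → A`, merges `u` and `v`. -/
def SatisfiesEq {X : Type u} (A : Type u) [Monoid A] [Finite A]
    (u v : FreeProfiniteMonoid X) : Prop :=
  ∀ h : FreeMonoid X →* A, evalHat h u = evalHat h v

instance conQuotTop {M : Type u} [Monoid M] (c : Con M) :
    TopologicalSpace c.Quotient := ⊥

instance (X : Type u) : TopologicalSpace (FreeProfiniteMonoid X) :=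
  inferInstanceAs (TopologicalSpace
    {u : ∀ c : FinCon (FreeMonoid X), c.1.Quotient //
      ∀ (c d : FinCon (FreeMonoid X)) (h : c.1 ≤ d.1),
        Con.map c.1 d.1 h (u c) = u d})

theorem evalHat_comp {X A B : Type u} [Monoid A] [Finite A] [Monoid B] [Finite B]
    (f : A →* B) (h : FreeMonoid X →* A) (u : FreeProfiniteMonoid X) :
    evalHat (f.comp h) u = f (evalHat h u) := by
  have hle : Con.ker h ≤ Con.ker (f.comp h) := fun x y hxy => by
    have : h x = h y := hxy
    show f (h x) = f (h y)
    rw [this]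
  have hcomp := u.2 ⟨Con.ker h, inferInstance⟩ ⟨Con.ker (f.comp h), inferInstance⟩ hle
  show Con.kerLift (f.comp h) (u.1 ⟨Con.ker (f.comp h), inferInstance⟩) = _
  rw [← hcomp]
  obtain ⟨w, hw⟩ := Con.mk'_surjective (u.1 ⟨Con.ker h, inferInstance⟩)
  rw [← hw]
  have : f ((evalHat h) u) = f (Con.kerLift h ((Con.ker h).mk' w)) := by rw [hw]; rfl
  rw [this]
  rfl

end FreeProfiniteMonoid

open FreeProfiniteMonoid in
/-- A class of finite monoids presented by a set of profinite equations
(pairs `u = v` of elements of free profinite monoids over finite sets) is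
closed under the trivial monoid, finite (binary) products, submonoids and
quotient monoids. -/
theorem profinite_equations_closure
    {ι : Type u} (Xs : ι → Type u) [∀ i, Finite (Xs i)]
    (eqs : ∀ i : ι, FreeProfiniteMonoid (Xs i) × FreeProfiniteMonoid (Xs i)) :
    -- the trivial monoid satisfies all equations
    (∀ i, SatisfiesEq PUnit (eqs i).1 (eqs i).2) ∧
    -- closure under binary products
    (∀ (A B : Type u) [Monoid A] [Finite A] [Monoid B] [Finite B],
      (∀ i, SatisfiesEq A (eqs i).1 (eqs i).2) →
      (∀ i, SatisfiesEq B (eqs i).1 (eqs i).2) →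
      ∀ i, SatisfiesEq (A × B) (eqs i).1 (eqs i).2) ∧
    -- closure under submonoids
    (∀ (A B : Type u) [Monoid A] [Finite A] [Monoid B] [Finite B]
      (m : B →* A), Function.Injective m →
      (∀ i, SatisfiesEq A (eqs i).1 (eqs i).2) →
      ∀ i, SatisfiesEq B (eqs i).1 (eqs i).2) ∧
    -- closure under quotients
    (∀ (A B : Type u) [Monoid A] [Finite A] [Monoid B] [Finite B]
      (e : A →* B), Function.Surjective e →
      (∀ i, SatisfiesEq A (eqs i).1 (eqs i).2) →
      ∀ i, SatisfiesEq B (eqs i).1 (eqs i).2) := by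
  refine ⟨fun i h => rfl, ?_, ?_, ?_⟩
  · intro A B _ _ _ _ hA hB i h
    have h1 : evalHat ((MonoidHom.fst A B).comp h) (eqs i).1 =
        evalHat ((MonoidHom.fst A B).comp h) (eqs i).2 := hA i _
    have h2 : evalHat ((MonoidHom.snd A B).comp h) (eqs i).1 =
        evalHat ((MonoidHom.snd A B).comp h) (eqs i).2 := hB i _
    rw [evalHat_comp, evalHat_comp] at h1 h2
    exact Prod.ext h1 h2
  · intro A B _ _ _ _ m hm hA i h
    have := hA i (m.comp h)
    rw [evalHat_comp, evalHat_comp] at this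
    exact hm this
  · intro A B _ _ _ _ e he hA i h
    -- lift h through e using freeness
    choose g hg using fun x : Xs i => he (h (FreeMonoid.of x))
    let g' : FreeMonoid (Xs i) →* A := FreeMonoid.lift g
    have hcomp : e.comp g' = h := by
      apply FreeMonoid.hom_eq
      intro x
      simp [g', hg]
    have := hA i g'
    have h1 := evalHat_comp e g' (eqs i).1
    have h2 := evalHat_comp e g' (eqs i).2
    rw [hcomp] at h1 h2
    rw [h1, h2, this]
end
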